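/- (Topological transitivity of the maximal invariant set.) Assume (F0), (F1), (F2) and (F01). Then G restricted to Λ_G is topologically transitive: for all nonempty relatively open subsets U, V of Λ_G there exists n∈ℕ with Gⁿ(U) ∩ V ≠ ∅. -/

import Mathlib

/-!
The fibre points reachable from any nondegenerate interval by words in `f₀` and the flip `f₁`
are dense in `[0, 1]`; transitivity then follows by gluing the itinerary of a point of `U`,
a steering word, and the itinerary of a point of `V`.

For the density, `f₀` is concave (its derivative decreases), so along `f₀`-orbits of an interval
`[p, q] ⊆ [0, 1)` the relative length `(q - p) / (1 - p)` never decreases and the escape ratio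
`(f₀ q - q) / (q - p)` never increases. Flipping and then climbing past a point `c` near `1`
multiplies the relative length by `(1 - μ) / (β₀ (β₀ - 1)) > 1`, where `μ` bounds the slopes of
`f₀` near `1` (this is where (F01) enters), unless it already exceeds `1 - β₀⁻¹`. From such a wide
interval, one more climb and flip gives an interval `[A, B]` near `0` with `f₀ A ≤ B`, whose
`f₀`-iterates sweep out `(0, 1)`.
-/

open Set Filter MeasureTheory

noncomputable section

/-- Condition (F0) on the fiber map `f₀`. -/
def F0cond (f₀ : ℝ → ℝ) (β₀ lam₀ : ℝ) : Prop :=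
  ContDiff ℝ 1 f₀ ∧ Set.MapsTo f₀ (Set.Icc 0 1) (Set.Icc 0 1) ∧
  StrictMonoOn f₀ (Set.Icc 0 1) ∧ f₀ 0 = 0 ∧ f₀ 1 = 1 ∧
  (∀ x ∈ Set.Ioo (0:ℝ) 1, x < f₀ x) ∧
  deriv f₀ 0 = β₀ ∧ 1 < β₀ ∧ deriv f₀ 1 = lam₀ ∧ 0 < lam₀ ∧ lam₀ < 1 ∧
  (∀ x ∈ Set.Icc (0:ℝ) 1, lam₀ ≤ deriv f₀ x)

/-- Condition (F1) on the fiber map `f₁`. -/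
def F1cond (f₁ : ℝ → ℝ) (γ lam₀ : ℝ) : Prop :=
  (∀ x, f₁ x = γ * (1 - x)) ∧ lam₀ ≤ γ ∧ γ < 1

/-- Condition (F2) on the fiber map `f₂`. -/
def F2cond (f₂ : ℝ → ℝ) (β₂ lam₀ : ℝ) : Prop :=
  ContDiff ℝ 1 f₂ ∧ Set.MapsTo f₂ (Set.Icc 0 1) (Set.Icc 0 1) ∧
  StrictMonoOn f₂ (Set.Icc 0 1) ∧ f₂ 0 = 0 ∧
  deriv f₂ 0 = β₂ ∧ 1 < β₂ ∧ (∀ x ∈ Set.Icc (0:ℝ) 1, lam₀ ≤ deriv f₂ x) ∧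
  ∃ p₂, p₂ ∈ Set.Ioo (0:ℝ) 1 ∧ f₂ p₂ = p₂ ∧ (∀ x ∈ Set.Ioo 0 p₂, x < f₂ x) ∧
    (∀ x ∈ Set.Ioc p₂ 1, f₂ x < x)

/-- Condition (F01). -/
def F01cond (f₀ : ℝ → ℝ) (β₀ lam₀ γ : ℝ) : Prop :=
  AntitoneOn (deriv f₀) (Set.Icc 0 1) ∧
  1 < γ * (lam₀ ^ 3 * (1 - lam₀) / (1 - β₀⁻¹))

/-- Condition (F012), with `H = [0,δ]`, `H' = [1-γ⁻¹δ,1]`, and the derived constants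
`β' = βpr`, `β_H = βH`, `λ' = lampr`, `L`. -/
def F012cond (f₀ f₁ f₂ : ℝ → ℝ) (γ lam₀ β₀ β₂ δ βpr βH lampr : ℝ) (L : ℕ) : Prop :=
  (∀ x ∈ Set.Icc (0:ℝ) 1, deriv f₀ x ≤ max β₀ β₂ ∧ deriv f₂ x ≤ max β₀ β₂) ∧
  0 < δ ∧ δ < γ ∧
  (f₁ '' Set.Icc 0 δ) ∩ Set.Icc 0 δ = ∅ ∧
  (f₁ '' Set.Icc (1 - γ⁻¹ * δ) 1) ∩ Set.Icc (1 - γ⁻¹ * δ) 1 = ∅ ∧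
  (f₁ '' Set.Icc 0 1) ∩ Set.Icc (1 - γ⁻¹ * δ) 1 = ∅ ∧
  (f₂ '' Set.Icc 0 1) ∩ Set.Icc (1 - γ⁻¹ * δ) 1 = ∅ ∧
  IsGreatest {y | ∃ x ∈ Set.Icc δ 1, y = max (deriv f₀ x) (deriv f₂ x)} βpr ∧
  1 < βpr ∧ βpr < min β₀ β₂ ∧
  IsLeast {y | ∃ x ∈ Set.Icc (0:ℝ) δ, y = min (deriv f₀ x) (deriv f₂ x)} βH ∧
  1 < βH ∧ βH < min β₀ β₂ ∧
  IsGreatest {y | ∃ x ∈ Set.Icc (1 - γ⁻¹ * δ) 1, y = deriv f₀ x} lampr ∧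
  lampr < 1 ∧
  |Real.log lam₀| * Real.log (max β₀ β₂) / Real.log βH - |Real.log lampr|
      + (2 / 3) * Real.log (max β₀ β₂) < (3 / 4) * Real.log βpr ∧
  1 ≤ L ∧
  4 * |Real.log lam₀| * Real.log (max β₀ β₂) / (Real.log βH * Real.log βpr) < (L : ℝ) ∧
  Real.log ((max β₀ β₂) ^ L * γ) / ((L : ℝ) + 1) < Real.log βpr

/-- `f_{ξ_{n-1}} ∘ ⋯ ∘ f_{ξ₀}`. -/
def seqComp (fs : Fin 3 → ℝ → ℝ) (ξ : ℕ → Fin 3) : ℕ → ℝ → ℝ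
  | 0 => id
  | n + 1 => fun x => fs (ξ n) (seqComp fs ξ n x)

/-- The upper Lyapunov exponent of the point `p` under the itinerary `ξ`. -/
def lyapUpper (fs : Fin 3 → ℝ → ℝ) (p : ℝ) (ξ : ℕ → Fin 3) : ℝ :=
  Filter.limsup (fun n : ℕ => (1 / (n : ℝ)) * Real.log |deriv (seqComp fs ξ n) p|) Filter.atTop

/-- Membership in the exceptional set `E`. -/
def exceptional (fs : Fin 3 → ℝ → ℝ) (p : ℝ) (ξ : ℕ → Fin 3) : Prop :=
  ∃ m : ℕ, seqComp fs ξ m p = 0 ∧ ∀ j, m ≤ j → (ξ j = 0 ∨ ξ j = 2)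

/-- `f_[w] = f_{w_{m-1}} ∘ ⋯ ∘ f_{w₀}` for a finite word `w`. -/
def wordComp {α : Type*} (fs : α → ℝ → ℝ) (w : List α) : ℝ → ℝ :=
  fun x => w.foldl (fun y i => fs i y) x

/-- The two-sided sequence space `Σ₃`. -/
abbrev Sig3 := ℤ → Fin 3

/-- The state space `Σ₃ × [0,1]`. -/
abbrev XSp := Sig3 × (Set.Icc (0:ℝ) 1)

instance : UniformSpace (Fin 3) := ⊥

/-- The left shift on `Σ₃`. -/
def shiftMap (ξ : Sig3) : Sig3 := fun i => ξ (i + 1)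

/-- The step skew product `G(ξ,x) = (σξ, f_{ξ₀}(x))` on `Σ₃ × [0,1]`. -/
def Gmap (fs : Fin 3 → ℝ → ℝ) : XSp → XSp :=
  fun p => (shiftMap p.1, Set.projIcc 0 1 (by norm_num) (fs (p.1 0) (p.2 : ℝ)))

/-- The maximal invariant set `Λ_G = ⋂ₙ Gⁿ(Σ₃ × [0,1])`. -/
def LamG (fs : Fin 3 → ℝ → ℝ) : Set XSp := ⋂ n : ℕ, (Gmap fs)^[n] '' Set.univ

/-- The lateral horseshoe `Λ₀₂`. -/
def Lam02 : Set XSp := {p | (∀ i, p.1 i ≠ 1) ∧ (p.2 : ℝ) = 0}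

/-- The central derivative potential `φ(ξ,x) = log|f_{ξ₀}'(x)|`. -/
def phiC (fs : Fin 3 → ℝ → ℝ) (p : XSp) : ℝ := Real.log |deriv (fs (p.1 0)) (p.2 : ℝ)|

/-- The central Lyapunov exponent `χ(μ) = ∫ φ dμ` of a measure. -/
def chiOf (fs : Fin 3 → ℝ → ℝ) (μ : Measure XSp) : ℝ := ∫ p, phiC fs p ∂μ

/-- `ν` is the `(p 0, p 1, p 2)`-Bernoulli measure on `Σ₃`. -/
def IsBernoulli (p : Fin 3 → ℝ) (ν : Measure Sig3) : Prop :=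
  IsProbabilityMeasure ν ∧ ∀ (s : Finset ℤ) (a : ℤ → Fin 3),
    ν {ξ | ∀ i ∈ s, ξ i = a i} = ENNReal.ofReal (∏ i ∈ s, p (a i))

open Topology

section Words

variable {α : Type*} (fs : α → ℝ → ℝ)

@[simp] lemma wordComp_nil : wordComp fs [] = id := rfl

@[simp] lemma wordComp_cons (i : α) (w : List α) (x : ℝ) :
    wordComp fs (i :: w) x = wordComp fs w (fs i x) := rfl

lemma wordComp_append (u v : List α) (x : ℝ) :
    wordComp fs (u ++ v) x = wordComp fs v (wordComp fs u x) :=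
  List.foldl_append

lemma wordComp_replicate (k : ℕ) (i : α) : wordComp fs (List.replicate k i) = (fs i)^[k] := by
  induction k with
  | zero => rfl
  | succ k ih => funext x; simp [List.replicate_succ, ih, Function.iterate_succ_apply]

lemma wordComp_mapsTo {s : Set ℝ} (hM : ∀ i, MapsTo (fs i) s s) (w : List α) :
    MapsTo (wordComp fs w) s s := by
  induction w with
  | nil => exact mapsTo_id s
  | cons i w ih => exact fun x hx => ih (hM i hx)

lemma continuous_wordComp (hC : ∀ i, Continuous (fs i)) (w : List α) :
    Continuous (wordComp fs w) := by
  induction w with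
  | nil => exact continuous_id
  | cons i w ih => exact ih.comp (hC i)

lemma wordComp_injOn {s : Set ℝ} (hM : ∀ i, MapsTo (fs i) s s) (hI : ∀ i, InjOn (fs i) s)
    (w : List α) : InjOn (wordComp fs w) s := by
  induction w with
  | nil => exact injOn_id s
  | cons i w ih => exact ih.comp (hI i) (hM i)

def reachSet (J : Set ℝ) : Set ℝ := ⋃ w : List α, wordComp fs w '' J

variable {fs}

lemma subset_reachSet (J : Set ℝ) : J ⊆ reachSet fs J :=
  fun x hx => mem_iUnion.2 ⟨[], x, hx, rfl⟩

lemma reachSet_mono {J J' : Set ℝ} (h : J ⊆ J') : reachSet fs J ⊆ reachSet fs J' :=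
  iUnion_mono fun _ => image_mono h

lemma reachSet_subset_of_subset {J J' : Set ℝ} (h : J' ⊆ reachSet fs J) :
    reachSet fs J' ⊆ reachSet fs J := by
  rintro _ ⟨_, ⟨v, rfl⟩, y, hy, rfl⟩
  obtain ⟨_, ⟨u, rfl⟩, x, hx, rfl⟩ := h hy
  exact mem_iUnion.2 ⟨u ++ v, x, hx, wordComp_append fs u v x⟩

lemma iterate_image_subset_reachSet (i : α) (k : ℕ) (J : Set ℝ) :
    (fs i)^[k] '' J ⊆ reachSet fs J := by
  rw [← wordComp_replicate]
  exact subset_iUnion (fun w => wordComp fs w '' J) _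

end Words

def relLength (p q : ℝ) : ℝ := (q - p) / (1 - p)

def escapeRatio (f : ℝ → ℝ) (p q : ℝ) : ℝ := (f q - q) / (q - p)

lemma one_sub_inv_le_relLength_iff {β p q : ℝ} (hβ : 0 < β) (hp : p < 1) :
    1 - β⁻¹ ≤ relLength p q ↔ β * (1 - q) ≤ 1 - p := by
  rw [relLength, le_div_iff₀ (by linarith), ← mul_le_mul_iff_right₀ hβ]
  field_simp
  constructor <;> intro h <;> linarith

/-- A North–South map of `[0, 1]`: `0` repels, `1` attracts every orbit of `(0, 1)`. -/
structure ConcaveNorthSouth (f : ℝ → ℝ) (β : ℝ) : Prop where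
  continuousOn : ContinuousOn f (Icc 0 1)
  mapsTo : MapsTo f (Icc 0 1) (Icc 0 1)
  strictMonoOn : StrictMonoOn f (Icc 0 1)
  map_one : f 1 = 1
  lt_self : ∀ x ∈ Ioo 0 1, x < f x
  concaveOn : ConcaveOn ℝ (Icc 0 1) f
  le_mul : ∀ x ∈ Icc 0 1, f x ≤ β * x

namespace ConcaveNorthSouth

variable {f : ℝ → ℝ} {β : ℝ} (hf : ConcaveNorthSouth f β)
include hf

lemma one_lt : 1 < β := by
  have h := (hf.lt_self (1 / 2) (by norm_num)).trans_le (hf.le_mul (1 / 2) (by norm_num))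
  linarith

lemma mapsTo_Ioo : MapsTo f (Ioo 0 1) (Ioo 0 1) := fun x hx =>
  ⟨hx.1.trans (hf.lt_self x hx),
    hf.map_one ▸ hf.strictMonoOn ⟨hx.1.le, hx.2.le⟩ ⟨zero_le_one, le_rfl⟩ hx.2⟩

lemma iterate_strictMonoOn (k : ℕ) : StrictMonoOn f^[k] (Icc 0 1) := by
  induction k with
  | zero => exact strictMono_id.strictMonoOn _
  | succ k ih =>
    intro x hx y hy hxy
    simp only [Function.iterate_succ_apply']
    exact hf.strictMonoOn (hf.mapsTo.iterate k hx) (hf.mapsTo.iterate k hy) (ih hx hy hxy)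

lemma tendsto_iterate {x : ℝ} (hx : x ∈ Ioo 0 1) :
    Tendsto (fun k => f^[k] x) atTop (𝓝 1) := by
  have hmem k : f^[k] x ∈ Ioo 0 1 := hf.mapsTo_Ioo.iterate k hx
  have hmono : Monotone fun k => f^[k] x := monotone_nat_of_le_succ fun k => by
    rw [Function.iterate_succ_apply']
    exact (hf.lt_self _ (hmem k)).le
  have hbdd : BddAbove (range fun k => f^[k] x) := ⟨1, by rintro _ ⟨k, rfl⟩; exact (hmem k).2.le⟩
  set L := ⨆ k, f^[k] x
  have hlim : Tendsto (fun k => f^[k] x) atTop (𝓝 L) := tendsto_atTop_ciSup hmono hbdd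
  have hL : L ∈ Icc x 1 := ⟨le_ciSup hbdd 0, ciSup_le fun k => (hmem k).2.le⟩
  have hfix : f L = L := by
    refine tendsto_nhds_unique ?_ ((tendsto_add_atTop_iff_nat 1).2 hlim)
    simp only [Function.iterate_succ_apply']
    exact ((hf.continuousOn.continuousWithinAt ⟨hx.1.le.trans hL.1, hL.2⟩).tendsto.comp
      (tendsto_nhdsWithin_iff.2 ⟨hlim, .of_forall fun k => Ioo_subset_Icc_self (hmem k)⟩))
  obtain hL1 | hL1 := hL.2.lt_or_eq
  · exact absurd hfix (hf.lt_self L ⟨hx.1.trans_le hL.1, hL1⟩).ne'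
  · rwa [hL1] at hlim

lemma exists_le_iterate {x c : ℝ} (hx : x ∈ Ioo 0 1) (hc : c < 1) : ∃ k, c ≤ f^[k] x :=
  ((hf.tendsto_iterate hx).eventually (eventually_ge_nhds hc)).exists

lemma Icc_subset_iterate_image (k : ℕ) {p q : ℝ} (hp : 0 ≤ p) (hpq : p ≤ q) (hq : q ≤ 1) :
    Icc (f^[k] p) (f^[k] q) ⊆ f^[k] '' Icc p q :=
  intermediate_value_Icc hpq ((hf.continuousOn.iterate hf.mapsTo k).mono (Icc_subset_Icc hp hq))

lemma exists_mem_iterate_image {A B t : ℝ} (hA : 0 < A) (hAB : f A ≤ B) (hB : B ≤ 1)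
    (ht : t ∈ Ico A 1) : ∃ k, t ∈ f^[k] '' Icc A B := by
  classical
  have hA1 : A ∈ Ioo 0 1 := ⟨hA, ht.1.trans_lt ht.2⟩
  have hex : ∃ k, t < f^[k] A :=
    ((hf.tendsto_iterate hA1).eventually (eventually_gt_nhds ht.2)).exists
  obtain ⟨k, hk⟩ : ∃ k, Nat.find hex = k + 1 :=
    Nat.exists_eq_succ_of_ne_zero fun h => (Nat.find_spec hex).not_ge (by rw [h]; exact ht.1)
  have hlow : f^[k] A ≤ t := not_lt.1 (Nat.find_min hex (by omega))
  have hup : t < f^[k] (f A) := by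
    have := Nat.find_spec hex
    rwa [hk, Function.iterate_succ_apply] at this
  have hfA : A ≤ f A := (hf.lt_self A hA1).le
  refine ⟨k, hf.Icc_subset_iterate_image k hA.le (hfA.trans hAB) hB ⟨hlow, hup.le.trans ?_⟩⟩
  exact (hf.iterate_strictMonoOn k).monotoneOn (hf.mapsTo ⟨hA.le, hA1.2.le⟩)
    ⟨hA.le.trans (hfA.trans hAB), hB⟩ hAB

lemma relLength_le_relLength {p q : ℝ} (hp : 0 ≤ p) (hpq : p < q) (hq : q < 1) :
    relLength p q ≤ relLength (f p) (f q) := by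
  have hslope := hf.concaveOn.slope_anti (x := p) ⟨hp, (hpq.trans hq).le⟩
    ⟨⟨(hp.trans hpq.le), hq.le⟩, hpq.ne'⟩ ⟨⟨hp.trans (hpq.trans hq).le, le_rfl⟩, (hpq.trans hq).ne'⟩
    hq.le
  have hfq : f q < 1 := (hf.mapsTo_Ioo ⟨hp.trans_lt hpq, hq⟩).2
  have hfpq : f p < f q := hf.strictMonoOn ⟨hp, (hpq.trans hq).le⟩ ⟨hp.trans hpq.le, hq.le⟩ hpq
  rw [slope_def_field, slope_def_field, hf.map_one] at hslope
  rw [relLength, relLength, div_le_div_iff₀ (by linarith) (by linarith)]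
  rw [div_le_div_iff₀ (by linarith) (by linarith)] at hslope
  linarith

lemma escapeRatio_le {p q : ℝ} (hp : 0 ≤ p) (hpq : p < q) (hq : q < 1) :
    escapeRatio f (f p) (f q) ≤ escapeRatio f p q := by
  have hqf : q < f q := hf.lt_self q ⟨hp.trans_lt hpq, hq⟩
  have hfpq : f p < f q := hf.strictMonoOn ⟨hp, (hpq.trans hq).le⟩ ⟨hp.trans hpq.le, hq.le⟩ hpq
  have hslope := hf.concaveOn.slope_anti_adjacent ⟨hp, (hpq.trans hq).le⟩
    (hf.mapsTo ⟨hp.trans hpq.le, hq.le⟩) hpq hqf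
  rw [escapeRatio, escapeRatio, div_le_div_iff₀ (by linarith) (by linarith)]
  rw [div_le_div_iff₀ (by linarith) (by linarith)] at hslope
  linarith

lemma iterate_bounds (k : ℕ) {p q : ℝ} (hp : 0 ≤ p) (hpq : p < q) (hq : q < 1) :
    0 ≤ f^[k] p ∧ f^[k] p < f^[k] q ∧ f^[k] q < 1 :=
  ⟨(hf.mapsTo.iterate k ⟨hp, (hpq.trans hq).le⟩).1,
    hf.iterate_strictMonoOn k ⟨hp, (hpq.trans hq).le⟩ ⟨hp.trans hpq.le, hq.le⟩ hpq,
    (hf.mapsTo_Ioo.iterate k ⟨hp.trans_lt hpq, hq⟩).2⟩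

lemma relLength_le_relLength_iterate (k : ℕ) {p q : ℝ} (hp : 0 ≤ p) (hpq : p < q) (hq : q < 1) :
    relLength p q ≤ relLength (f^[k] p) (f^[k] q) := by
  induction k with
  | zero => exact le_rfl
  | succ k ih =>
    obtain ⟨hp', hpq', hq'⟩ := hf.iterate_bounds k hp hpq hq
    simpa only [Function.iterate_succ_apply'] using ih.trans (hf.relLength_le_relLength hp' hpq' hq')

lemma escapeRatio_iterate_le (k : ℕ) {p q : ℝ} (hp : 0 ≤ p) (hpq : p < q) (hq : q < 1) :
    escapeRatio f (f^[k] p) (f^[k] q) ≤ escapeRatio f p q := by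
  induction k with
  | zero => exact le_rfl
  | succ k ih =>
    obtain ⟨hp', hpq', hq'⟩ := hf.iterate_bounds k hp hpq hq
    simpa only [Function.iterate_succ_apply'] using (hf.escapeRatio_le hp' hpq' hq').trans ih

/-- Along `[a, b] = f^[j] [A, B]` the escape ratio decreases; it is at most `(β - 1) B / (B - A)`
at `[A, B]`, and at least `(1 - μ) (1 - b) / (b - a)` once `b ≥ c`. -/
lemma relLength_iterate_growth {c μ : ℝ} (hμ1 : μ ≤ 1)
    (hμ : ∀ b ∈ Ico c 1, 1 - f b ≤ μ * (1 - b)) {A B : ℝ} (hA : 0 ≤ A) (hAB : A < B) (hB : B < 1)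
    {j : ℕ} (hj : c ≤ f^[j] B) (hβb : 1 - f^[j] A < β * (1 - f^[j] B)) :
    (1 - μ) * ((B - A) / B) ≤ β * (β - 1) * relLength (f^[j] A) (f^[j] B) := by
  obtain ⟨ha, hab, hb⟩ := hf.iterate_bounds j hA hAB hB
  set a := f^[j] A
  set b := f^[j] B
  have hβ := hf.one_lt
  have hgap : (1 - μ) * (1 - b) ≤ f b - b := by nlinarith [hμ b ⟨hj, hb⟩]
  have hesc := hf.escapeRatio_iterate_le j hA hAB hB
  rw [escapeRatio, escapeRatio, div_le_div_iff₀ (by linarith) (by linarith)] at hesc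
  have hfB : f B ≤ β * B := hf.le_mul B ⟨by linarith, hB.le⟩
  rw [relLength, ← mul_div_assoc, ← mul_div_assoc, div_le_div_iff₀ (by linarith) (by linarith)]
  calc (1 - μ) * (B - A) * (1 - a)
      ≤ (1 - μ) * (B - A) * (β * (1 - b)) :=
        mul_le_mul_of_nonneg_left hβb.le (mul_nonneg (by linarith) (by linarith))
    _ = β * (B - A) * ((1 - μ) * (1 - b)) := by ring
    _ ≤ β * (B - A) * (f b - b) :=
        mul_le_mul_of_nonneg_left hgap (mul_nonneg (by linarith) (by linarith))
    _ = β * ((f b - b) * (B - A)) := by ring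
    _ ≤ β * ((f B - B) * (b - a)) := mul_le_mul_of_nonneg_left hesc (by linarith)
    _ ≤ β * ((β - 1) * B * (b - a)) := by
        gcongr
        linarith
    _ = β * (β - 1) * (b - a) * B := by ring

end ConcaveNorthSouth

section Reach

variable {α : Type*} {fs : α → ℝ → ℝ} {i₀ i₁ : α} {β γ : ℝ}

lemma Icc_flip_subset_reachSet (hg : ∀ x, fs i₁ x = γ * (1 - x)) {p q : ℝ} (hpq : p ≤ q) :
    Icc (γ * (1 - q)) (γ * (1 - p)) ⊆ reachSet fs (Icc p q) := by
  have hcont : Continuous (fs i₁) := by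
    rw [funext hg]; fun_prop
  have h := intermediate_value_Icc' hpq hcont.continuousOn
  rw [hg, hg] at h
  exact h.trans (iterate_image_subset_reachSet i₁ 1 _)

lemma Icc_iterate_subset_reachSet (hf : ConcaveNorthSouth (fs i₀) β) (k : ℕ) {p q : ℝ}
    (hp : 0 ≤ p) (hpq : p ≤ q) (hq : q ≤ 1) :
    Icc ((fs i₀)^[k] p) ((fs i₀)^[k] q) ⊆ reachSet fs (Icc p q) :=
  (hf.Icc_subset_iterate_image k hp hpq hq).trans (iterate_image_subset_reachSet i₀ k _)

/-- Once the relative length exceeds `1 - β⁻¹`, iterating `f` towards `1` and flipping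
produces a fundamental domain `[A, B] ∋ f A` of `f` arbitrarily close to `0`. -/
lemma Ioo_subset_reachSet_of_relLength (hf : ConcaveNorthSouth (fs i₀) β)
    (hg : ∀ x, fs i₁ x = γ * (1 - x)) (hγ : γ ∈ Ioo 0 1) {h₁ h₂ : ℝ} (h0 : 0 ≤ h₁)
    (h12 : h₁ < h₂) (h21 : h₂ < 1) (hw : 1 - β⁻¹ ≤ relLength h₁ h₂) :
    Ioo 0 1 ⊆ reachSet fs (Icc h₁ h₂) := by
  set f := fs i₀
  intro t ht
  obtain ⟨k, hk⟩ := hf.exists_le_iterate ⟨h0.trans_lt h12, h21⟩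
    (show 1 - t / γ < 1 by linarith [div_pos ht.1 hγ.1])
  obtain ⟨hp, hpq, hq⟩ := hf.iterate_bounds k h0 h12 h21
  set p := f^[k] h₁
  set q := f^[k] h₂
  have hβq : β * (1 - q) ≤ 1 - p := (one_sub_inv_le_relLength_iff (by linarith [hf.one_lt])
    (hpq.trans hq)).1 (hw.trans (hf.relLength_le_relLength_iterate k h0 h12 h21))
  have hA : 0 < γ * (1 - q) := mul_pos hγ.1 (by linarith)
  have hAt : γ * (1 - q) ≤ t := by
    have := mul_le_mul_of_nonneg_left (show 1 - q ≤ t / γ by linarith) hγ.1.le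
    rwa [mul_div_cancel₀ _ hγ.1.ne'] at this
  have hAB : f (γ * (1 - q)) ≤ γ * (1 - p) := calc
    f (γ * (1 - q)) ≤ β * (γ * (1 - q)) := hf.le_mul _ ⟨hA.le, by nlinarith [hγ.2]⟩
    _ = γ * (β * (1 - q)) := by ring
    _ ≤ γ * (1 - p) := mul_le_mul_of_nonneg_left hβq hγ.1.le
  have hB : γ * (1 - p) ≤ 1 := by nlinarith [hγ.2]
  obtain ⟨m, hm⟩ := hf.exists_mem_iterate_image hA hAB hB ⟨hAt, ht.2⟩
  exact reachSet_subset_of_subset (Icc_iterate_subset_reachSet hf k h0 h12.le h21.le)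
    (reachSet_subset_of_subset (Icc_flip_subset_reachSet hg hpq.le)
      (iterate_image_subset_reachSet i₀ m _ hm))

lemma exists_relLength_growth (hf : ConcaveNorthSouth (fs i₀) β)
    (hg : ∀ x, fs i₁ x = γ * (1 - x)) (hγ : γ ∈ Ioo 0 1) {c μ : ℝ} (hc : c < 1) (hμ1 : μ ≤ 1)
    (hμ : ∀ b ∈ Ico c 1, 1 - fs i₀ b ≤ μ * (1 - b)) {x₁ x₂ : ℝ} (h0 : 0 ≤ x₁) (h12 : x₁ < x₂)
    (h21 : x₂ < 1) :
    ∃ y₁ y₂, 0 ≤ y₁ ∧ y₁ < y₂ ∧ y₂ < 1 ∧ Icc y₁ y₂ ⊆ reachSet fs (Icc x₁ x₂) ∧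
      (1 - β⁻¹ ≤ relLength y₁ y₂ ∨
        (1 - μ) * relLength x₁ x₂ ≤ β * (β - 1) * relLength y₁ y₂) := by
  set A := γ * (1 - x₂)
  set B := γ * (1 - x₁)
  have hA : 0 < A := mul_pos hγ.1 (by linarith)
  have hAB : A < B := mul_lt_mul_of_pos_left (by linarith) hγ.1
  have hB : B < 1 := by nlinarith [hγ.2]
  obtain ⟨j, hj⟩ := hf.exists_le_iterate ⟨hA.trans hAB, hB⟩ hc
  obtain ⟨ha, hab, hb⟩ := hf.iterate_bounds j hA.le hAB hB
  refine ⟨_, _, ha, hab, hb, (Icc_iterate_subset_reachSet hf j hA.le hAB.le hB.le).trans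
    (reachSet_subset_of_subset (Icc_flip_subset_reachSet hg h12.le)), or_iff_not_imp_left.2
    fun hnw => ?_⟩
  have hrel : relLength x₁ x₂ = (B - A) / B := by
    simp only [relLength, A, B]
    rw [← mul_sub, mul_div_mul_left _ _ hγ.1.ne']
    ring_nf
  rw [hrel]
  exact hf.relLength_iterate_growth hμ1 hμ hA.le hAB hB hj (not_le.1 fun h =>
    hnw ((one_sub_inv_le_relLength_iff (by linarith [hf.one_lt]) (hab.trans hb)).2 h))

lemma exists_relLength_ge_subset_reachSet (hf : ConcaveNorthSouth (fs i₀) β)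
    (hg : ∀ x, fs i₁ x = γ * (1 - x)) (hγ : γ ∈ Ioo 0 1) {c μ : ℝ} (hc : c < 1)
    (hμβ : β * (β - 1) < 1 - μ) (hμ : ∀ b ∈ Ico c 1, 1 - fs i₀ b ≤ μ * (1 - b)) {x₁ x₂ : ℝ}
    (h0 : 0 ≤ x₁) (h12 : x₁ < x₂) (h21 : x₂ < 1) :
    ∃ y₁ y₂, 0 ≤ y₁ ∧ y₁ < y₂ ∧ y₂ < 1 ∧ 1 - β⁻¹ ≤ relLength y₁ y₂ ∧
      Icc y₁ y₂ ⊆ reachSet fs (Icc x₁ x₂) := by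
  have hβ := hf.one_lt
  have hββ : 0 < β * (β - 1) := mul_pos (by linarith) (by linarith)
  set K := (1 - μ) / (β * (β - 1))
  have hK : 1 < K := (one_lt_div hββ).2 hμβ
  have hrel : 0 < relLength x₁ x₂ := div_pos (by linarith) (by linarith)
  obtain ⟨n, hn⟩ := pow_unbounded_of_one_lt (relLength x₁ x₂)⁻¹ hK
  replace hn : 1 ≤ K ^ n * relLength x₁ x₂ := by
    rw [inv_lt_iff_one_lt_mul₀ hrel] at hn; exact hn.le
  induction n generalizing x₁ x₂ with
  | zero =>
    refine ⟨x₁, x₂, h0, h12, h21, ?_, subset_reachSet _⟩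
    have : 0 < β⁻¹ := inv_pos.2 (by linarith)
    simp only [pow_zero, one_mul] at hn
    linarith
  | succ n ih =>
    obtain ⟨y₁, y₂, hy0, hy12, hy21, hsub, hw | hgrow⟩ :=
      exists_relLength_growth hf hg hγ hc (by nlinarith) hμ h0 h12 h21
    · exact ⟨y₁, y₂, hy0, hy12, hy21, hw, hsub⟩
    have hKy : K * relLength x₁ x₂ ≤ relLength y₁ y₂ := by
      rw [div_mul_eq_mul_div, div_le_iff₀ hββ]; linarith
    obtain ⟨z₁, z₂, hz0, hz12, hz21, hw, hsub'⟩ := ih hy0 hy12 hy21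
      (div_pos (by linarith) (by linarith)) (by
        calc 1 ≤ K ^ (n + 1) * relLength x₁ x₂ := hn
          _ = K ^ n * (K * relLength x₁ x₂) := by ring
          _ ≤ K ^ n * relLength y₁ y₂ := by gcongr)
    exact ⟨z₁, z₂, hz0, hz12, hz21, hw, hsub'.trans (reachSet_subset_of_subset hsub)⟩

theorem Ioo_subset_reachSet (hf : ConcaveNorthSouth (fs i₀) β)
    (hg : ∀ x, fs i₁ x = γ * (1 - x)) (hγ : γ ∈ Ioo 0 1) {c μ : ℝ} (hc : c < 1)
    (hμβ : β * (β - 1) < 1 - μ) (hμ : ∀ b ∈ Ico c 1, 1 - fs i₀ b ≤ μ * (1 - b)) {a b : ℝ}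
    (ha : 0 ≤ a) (hab : a < b) (hb : b ≤ 1) :
    Ioo 0 1 ⊆ reachSet fs (Icc a b) := by
  obtain ⟨y₁, y₂, hy0, hy12, hy21, hw, hsub⟩ := exists_relLength_ge_subset_reachSet hf hg hγ hc
    hμβ hμ ha (show a < (a + b) / 2 by linarith) (show (a + b) / 2 < 1 by linarith)
  exact (Ioo_subset_reachSet_of_relLength hf hg hγ hy0 hy12 hy21 hw).trans
    ((reachSet_subset_of_subset hsub).trans (reachSet_mono (Icc_subset_Icc le_rfl (by linarith))))

end Reach

section Symbolic

variable {α : Type*}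

def block (ξ : ℤ → α) (m : ℤ) (n : ℕ) : List α := List.ofFn fun k : Fin n => ξ (m + k)

lemma block_add (ξ : ℤ → α) (m : ℤ) (n₁ n₂ : ℕ) :
    block ξ m (n₁ + n₂) = block ξ m n₁ ++ block ξ (m + n₁) n₂ := by
  simp [block, List.ofFn_add, add_assoc]

lemma block_congr {ξ η : ℤ → α} {m m' : ℤ} {n : ℕ} (h : ∀ k < n, ξ (m + k) = η (m' + k)) :
    block ξ m n = block η m' n :=
  List.ofFn_inj.2 (funext fun k => h k k.2)

lemma block_eq_of_getElem {ξ : ℤ → α} {m : ℤ} {w : List α}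
    (h : ∀ k (hk : k < w.length), ξ (m + k) = w[k]) : block ξ m w.length = w :=
  List.ext_getElem (by simp [block]) fun k _ _ => by simp [block, h]

/-- `ξ` on `[-N, N]`, then the word `w`, then `η` shifted so that `η 0` sits `M` places after
the end of `w`; the constant `d` in the far past. -/
def glue (ξ : ℤ → α) (N : ℕ) (w : List α) (η : ℤ → α) (M : ℕ) (d : α) : ℤ → α := fun i =>
  if i < -(N : ℤ) then d
  else if i ≤ N then ξ i
  else if i ≤ N + w.length then w.getD (i - N - 1).toNat d
  else η (i - (N + 1 + w.length + M : ℕ))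

variable (ξ : ℤ → α) (N : ℕ) (w : List α) (η : ℤ → α) (M : ℕ) (d : α)

lemma glue_of_lt {i : ℤ} (hi : i < -(N : ℤ)) : glue ξ N w η M d i = d := if_pos hi

lemma glue_of_mem {i : ℤ} (h₁ : -(N : ℤ) ≤ i) (h₂ : i ≤ N) : glue ξ N w η M d i = ξ i := by
  simp only [glue, if_neg (not_lt.2 h₁), if_pos h₂]

lemma glue_add {i : ℤ} (hi : -(M : ℤ) ≤ i) :
    glue ξ N w η M d (i + (N + 1 + w.length + M : ℕ)) = η i := by
  simp only [glue]
  rw [if_neg (by push_cast; omega), if_neg (by push_cast; omega), if_neg (by push_cast; omega)]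
  congr 1; omega

lemma block_glue :
    block (glue ξ N w η M d) 0 (N + 1 + w.length + M) =
      block ξ 0 (N + 1) ++ w ++ block η (-M) M := by
  rw [block_add, block_add]
  congr 1; congr 1
  · exact block_congr fun k hk => glue_of_mem _ _ _ _ _ _ (by omega) (by omega)
  · refine block_eq_of_getElem fun k hk => ?_
    simp only [glue]
    rw [if_neg (by push_cast; omega), if_neg (by push_cast; omega), if_pos (by push_cast; omega),
      show (((0 : ℤ) + (N + 1 : ℕ) + k - N - 1).toNat) = k by omega, List.getD_eq_getElem]
  · exact block_congr fun k hk => by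
      rw [← glue_add ξ N w η M d (show -(M : ℤ) ≤ -M + k by omega)]
      congr 1; push_cast; ring

end Symbolic

lemma Set.subset_iterate_image {β : Type*} {f : β → β} {S : Set β} (h : S ⊆ f '' S) (n : ℕ) :
    S ⊆ f^[n] '' S := by
  induction n with
  | zero => simp
  | succ n ih =>
    rw [Function.iterate_succ', image_comp]
    exact h.trans (image_mono ih)

section SkewProduct

variable {fs : Fin 3 → ℝ → ℝ}

lemma Gmap_iterate_fst (n : ℕ) (p : XSp) : ((Gmap fs)^[n] p).1 = fun i => p.1 (i + n) := by
  induction n with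
  | zero => simp
  | succ n ih =>
    funext i
    rw [Function.iterate_succ_apply']
    change ((Gmap fs)^[n] p).1 (i + 1) = _
    rw [ih]
    exact congrArg p.1 (by push_cast; ring)

lemma Gmap_iterate_snd (hM : ∀ i, MapsTo (fs i) (Icc 0 1) (Icc 0 1)) (n : ℕ) (p : XSp) :
    (((Gmap fs)^[n] p).2 : ℝ) = wordComp fs (block p.1 0 n) p.2 := by
  induction n with
  | zero => rfl
  | succ n ih =>
    rw [Function.iterate_succ_apply']
    change (projIcc 0 1 zero_le_one (fs (((Gmap fs)^[n] p).1 0) ((Gmap fs)^[n] p).2) : ℝ) = _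
    rw [ih, Gmap_iterate_fst, projIcc_of_mem zero_le_one (hM _ (wordComp_mapsTo fs hM _ p.2.2)), block_add,
      wordComp_append]
    simp [block]

lemma iterate_mapsTo_LamG (n : ℕ) : MapsTo (Gmap fs)^[n] (LamG fs) (LamG fs) :=
  fun p hp => mem_iInter.2 fun k => by
    obtain ⟨q, -, rfl⟩ := mem_iInter.1 hp k
    exact ⟨(Gmap fs)^[n] q, trivial, by
      rw [← Function.iterate_add_apply, add_comm, Function.iterate_add_apply]⟩

lemma exists_wordComp_eq_of_mem_LamG (hM : ∀ i, MapsTo (fs i) (Icc 0 1) (Icc 0 1)) {p : XSp}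
    (hp : p ∈ LamG fs) (n : ℕ) : ∃ x ∈ Icc (0 : ℝ) 1, wordComp fs (block p.1 (-n) n) x = p.2 := by
  obtain ⟨q, -, rfl⟩ := mem_iInter.1 hp n
  refine ⟨q.2, q.2.2, ?_⟩
  rw [Gmap_iterate_snd hM, Gmap_iterate_fst]
  congr 1
  exact block_congr fun k _ => congrArg q.1 (by ring)

/-- Points whose symbolic past is all `0` lie in `Λ_G`, since `f₀` maps `[0, 1]` onto itself;
hence so does every forward image of such a point. -/
lemma mem_LamG_of_zero_past (hM : ∀ i, MapsTo (fs i) (Icc 0 1) (Icc 0 1))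
    (hsurj : Icc 0 1 ⊆ fs 0 '' Icc 0 1) {N : ℕ} {p : XSp} (hzero : ∀ i < -(N : ℤ), p.1 i = 0)
    (hx : (p.2 : ℝ) ∈ wordComp fs (block p.1 (-N) N) '' Icc 0 1) : p ∈ LamG fs := by
  set Z := {q : XSp | ∀ i < 0, q.1 i = 0}
  have hZ : Z ⊆ Gmap fs '' Z := by
    intro q hq
    obtain ⟨y, hy, hyq⟩ := hsurj q.2.2
    refine ⟨(fun i => q.1 (i - 1), ⟨y, hy⟩), fun i hi => hq _ (by omega), Prod.ext ?_ ?_⟩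
    · funext i; simp [Gmap, shiftMap]
    · simp [Gmap, hq (-1) (by norm_num), hyq]
  obtain ⟨u, hu, hux⟩ := hx
  have hp : (Gmap fs)^[N] (fun i => p.1 (i - N), ⟨u, hu⟩) = p := by
    refine Prod.ext ?_ (Subtype.ext ?_)
    · rw [Gmap_iterate_fst]; funext i; simp
    · rw [Gmap_iterate_snd hM, ← hux]
      exact congrArg₂ _ (block_congr fun k _ => congrArg p.1 (by ring)) rfl
  rw [← hp]
  refine iterate_mapsTo_LamG N (mem_iInter.2 fun n => image_mono (subset_univ Z) ?_)
  exact Set.subset_iterate_image hZ n fun i hi => hzero _ (by omega)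

lemma exists_cylinder_subset {U : Set XSp} (hU : IsOpen U) {p : XSp} (hp : p ∈ U) :
    ∃ (N : ℕ) (ε : ℝ), 0 < ε ∧ ∀ q : XSp, (∀ i : ℤ, -(N : ℤ) ≤ i → i ≤ N → q.1 i = p.1 i) →
      dist q.2 p.2 < ε → q ∈ U := by
  have hUp := hU.mem_nhds hp
  rw [nhds_prod_eq, mem_prod_iff] at hUp
  obtain ⟨A, hA, B, hB, hAB⟩ := hUp
  rw [nhds_pi, Filter.mem_pi] at hA
  obtain ⟨I, hI, u, hu, hAu⟩ := hA
  obtain ⟨ε, hε, hball⟩ := Metric.mem_nhds_iff.1 hB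
  refine ⟨hI.toFinset.sup Int.natAbs, ε, hε, fun q hq hdist => hAB ⟨hAu fun i hi => ?_, hball hdist⟩⟩
  have hiN : i.natAbs ≤ hI.toFinset.sup Int.natAbs := Finset.le_sup (hI.mem_toFinset.2 hi)
  rw [hq i (by omega) (by omega)]
  exact mem_of_mem_nhds (hu i)

end SkewProduct

lemma exists_Icc_subset_image {f : ℝ → ℝ} {a b : ℝ} (hf : ContinuousOn f (Icc a b))
    (hinj : InjOn f (Icc a b)) (hab : a < b) : ∃ c d, c < d ∧ Icc c d ⊆ f '' Icc a b := by
  refine ⟨min (f a) (f b), max (f a) (f b), min_lt_max.2 ?_, ?_⟩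
  · exact hinj.ne ⟨le_rfl, hab.le⟩ ⟨hab.le, le_rfl⟩ hab.ne
  · rw [← uIcc_of_le hab.le] at hf ⊢
    exact intermediate_value_uIcc hf

lemma exists_Icc_subset_image_inter_ball {f : ℝ → ℝ} (hf : ContinuousOn f (Icc 0 1))
    (hinj : InjOn f (Icc 0 1)) {x ε : ℝ} (hx : x ∈ f '' Icc 0 1) (hε : 0 < ε) :
    ∃ a b, a < b ∧ Icc a b ⊆ f '' Icc 0 1 ∩ Metric.ball x ε := by
  have hS : IsPreconnected (f '' Icc 0 1) := isPreconnected_Icc.image f hf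
  obtain ⟨y, hy, hxy⟩ : ∃ y ∈ f '' Icc 0 1, x ≠ y := by
    by_cases h : x = f 0
    · exact ⟨f 1, mem_image_of_mem f ⟨zero_le_one, le_rfl⟩, h ▸
        hinj.ne ⟨le_rfl, zero_le_one⟩ ⟨zero_le_one, le_rfl⟩ zero_ne_one⟩
    · exact ⟨f 0, mem_image_of_mem f ⟨le_rfl, zero_le_one⟩, h⟩
  rcases hxy.lt_or_gt with h | h
  · refine ⟨x, min y (x + ε / 2), lt_min h (by linarith), fun z hz => ⟨hS.Icc_subset hx hy
      ⟨hz.1, hz.2.trans (min_le_left _ _)⟩, ?_⟩⟩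
    rw [Metric.mem_ball, Real.dist_eq, abs_lt]
    constructor <;> linarith [hz.1, hz.2, min_le_right y (x + ε / 2)]
  · refine ⟨max y (x - ε / 2), x, max_lt h (by linarith), fun z hz => ⟨hS.Icc_subset hy hx
      ⟨(le_max_left _ _).trans hz.1, hz.2⟩, ?_⟩⟩
    rw [Metric.mem_ball, Real.dist_eq, abs_lt]
    constructor <;> linarith [hz.1, hz.2, le_max_right y (x - ε / 2)]

theorem topologicallyTransitive_LamG_of_dense_reachSet {fs : Fin 3 → ℝ → ℝ}
    (hM : ∀ i, MapsTo (fs i) (Icc 0 1) (Icc 0 1)) (hC : ∀ i, Continuous (fs i))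
    (hI : ∀ i, InjOn (fs i) (Icc 0 1)) (hsurj : Icc 0 1 ⊆ fs 0 '' Icc 0 1)
    (hdense : ∀ a b : ℝ, 0 ≤ a → a < b → b ≤ 1 → Icc 0 1 ⊆ closure (reachSet fs (Icc a b))) :
    ∀ U V : Set XSp, IsOpen U → IsOpen V →
      (U ∩ LamG fs).Nonempty → (V ∩ LamG fs).Nonempty →
      ∃ n : ℕ, ((Gmap fs)^[n] '' (U ∩ LamG fs) ∩ (V ∩ LamG fs)).Nonempty := by
  rintro U V hU hV ⟨pU, hpU, hpUΛ⟩ ⟨pV, hpV, hpVΛ⟩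
  obtain ⟨N, ε, hε, hUcyl⟩ := exists_cylinder_subset hU hpU
  obtain ⟨M, ρ, hρ, hVcyl⟩ := exists_cylinder_subset hV hpV
  have hcont (w : List (Fin 3)) := continuous_wordComp fs hC w
  have hmaps (w : List (Fin 3)) := wordComp_mapsTo fs hM w
  obtain ⟨a, b, hab, habU⟩ := exists_Icc_subset_image_inter_ball (hcont _).continuousOn
    (wordComp_injOn fs hM hI _) (exists_wordComp_eq_of_mem_LamG hM hpUΛ N) hε
  have hab01 : Icc a b ⊆ Icc 0 1 := fun z hz => (hmaps _).image_subset (habU hz).1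
  obtain ⟨a₁, b₁, hab₁, himg⟩ := exists_Icc_subset_image (hcont (block pU.1 0 (N + 1))).continuousOn
    ((wordComp_injOn fs hM hI _).mono hab01) hab
  have hab₁01 : Icc a₁ b₁ ⊆ Icc 0 1 := himg.trans ((image_mono hab01).trans (hmaps _).image_subset)
  obtain ⟨y, hy, hyV⟩ := exists_wordComp_eq_of_mem_LamG hM hpVΛ M
  obtain ⟨δ, hδ, hTV⟩ := Metric.continuous_iff.1 (hcont (block pV.1 (-M) M)) y ρ hρ
  obtain ⟨_, hreach, hsy⟩ := Metric.mem_closure_iff.1 (hdense a₁ b₁ (hab₁01 ⟨le_rfl, hab₁.le⟩).1 hab₁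
    (hab₁01 ⟨hab₁.le, le_rfl⟩).2 hy) δ hδ
  obtain ⟨w, s, hs, rfl⟩ := mem_iUnion.1 hreach
  obtain ⟨z, hz, rfl⟩ := himg hs
  let P : XSp := (glue pU.1 N w pV.1 M 0, ⟨z, hab01 hz⟩)
  have hPΛ : P ∈ LamG fs := by
    refine mem_LamG_of_zero_past hM hsurj (fun i hi => glue_of_lt _ _ _ _ _ _ hi) ?_
    rw [block_congr fun k _ => glue_of_mem pU.1 N w pV.1 M 0 (by omega) (by omega)]
    exact (habU hz).1
  refine ⟨N + 1 + w.length + M, _, ⟨P, ⟨hUcyl P (fun i => glue_of_mem _ _ _ _ _ _)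
    (by rw [Subtype.dist_eq]; exact (habU hz).2), hPΛ⟩, rfl⟩,
    hVcyl _ (fun i hi _ => by rw [Gmap_iterate_fst]; exact glue_add _ _ _ _ _ _ hi) ?_,
    iterate_mapsTo_LamG _ hPΛ⟩
  rw [Subtype.dist_eq, Gmap_iterate_snd hM, block_glue, wordComp_append, wordComp_append, ← hyV]
  exact hTV _ (by rwa [dist_comm])

section Hypotheses

variable {f : ℝ → ℝ} {β lam : ℝ}

lemma F0cond.concaveNorthSouth (h : F0cond f β lam) (hanti : AntitoneOn (deriv f) (Icc 0 1)) :
    ConcaveNorthSouth f β := by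
  obtain ⟨hcd, hmaps, hmono, hf0, hf1, hpush, hd0, -⟩ := h
  have hdiff := hcd.differentiable one_ne_zero
  have hconc : ConcaveOn ℝ (Icc 0 1) f := (hanti.mono interior_subset).concaveOn_of_deriv
    (convex_Icc 0 1) hcd.continuous.continuousOn hdiff.differentiableOn
  refine ⟨hcd.continuous.continuousOn, hmaps, hmono, hf1, hpush, hconc, fun x hx => ?_⟩
  rcases hx.1.eq_or_lt with rfl | hx0
  · simp [hf0]
  · have := hconc.slope_le_deriv ⟨le_rfl, zero_le_one⟩ hx hx0 (hdiff 0)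
    rwa [slope_def_field, hf0, hd0, sub_zero, sub_zero, div_le_iff₀ hx0] at this

lemma F0cond.exists_one_sub_le (h : F0cond f β lam) (hanti : AntitoneOn (deriv f) (Icc 0 1))
    {K : ℝ} (hK : lam < K) : ∃ c < 1, ∃ μ < K, ∀ b ∈ Ico c 1, 1 - f b ≤ μ * (1 - b) := by
  obtain ⟨hcd, -, -, -, hf1, -, -, -, hd1, -⟩ := h
  have hnear : ∀ᶠ c in 𝓝 1, deriv f c < K :=
    ((hcd.continuous_deriv le_rfl).tendsto 1).eventually (eventually_lt_nhds (hd1 ▸ hK))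
  obtain ⟨c, hcK, hc⟩ :=
    ((hnear.filter_mono nhdsWithin_le_nhds).and (Ioo_mem_nhdsLT zero_lt_one)).exists
  refine ⟨c, hc.2, deriv f c, hcK, fun b hb => ?_⟩
  obtain ⟨ξ, hξ, hslope⟩ := exists_deriv_eq_slope f hb.2 hcd.continuous.continuousOn
    (hcd.differentiable one_ne_zero).differentiableOn
  have hle : deriv f ξ ≤ deriv f c :=
    hanti ⟨hc.1.le, hc.2.le⟩ ⟨hc.1.le.trans (hb.1.trans hξ.1.le), hξ.2.le⟩ (hb.1.trans hξ.1.le)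
  rw [hslope, hf1, div_le_iff₀ (by linarith [hb.2])] at hle
  linarith

lemma lt_one_sub_mul_sub_one {γ : ℝ} (hβ : 1 < β) (hlam : lam ∈ Ioo 0 1) (hγ0 : 0 < γ)
    (hγ1 : γ ≤ 1) (h : 1 < γ * (lam ^ 3 * (1 - lam) / (1 - β⁻¹))) :
    lam < 1 - β * (β - 1) := by
  suffices β * (β - 1) < 1 - lam by linarith
  have hβ0 : 0 < β := by linarith
  have hX : 0 < 1 - β⁻¹ := sub_pos.2 (inv_lt_one_of_one_lt₀ hβ)
  rw [mul_div_assoc', lt_div_iff₀ hX, one_mul] at h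
  have hγlam : γ * lam ^ 3 ≤ 1 := by
    nlinarith [pow_pos hlam.1 3, pow_lt_one₀ hlam.1.le hlam.2 (by norm_num : 3 ≠ 0)]
  have hβlam : β * lam < 1 := by
    have : lam < β⁻¹ := by nlinarith [hlam.2]
    calc β * lam < β * β⁻¹ := mul_lt_mul_of_pos_left this hβ0
      _ = 1 := mul_inv_cancel₀ hβ0.ne'
  calc β * (β - 1) = β ^ 2 * (1 - β⁻¹) := by field_simp
    _ < β ^ 2 * (γ * (lam ^ 3 * (1 - lam))) := mul_lt_mul_of_pos_left h (by positivity)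
    _ = (β * lam) ^ 2 * (γ * lam) * (1 - lam) := by ring
    _ ≤ 1 - lam := mul_le_of_le_one_left (by linarith [hlam.2]) (mul_le_one₀
        (pow_le_one₀ (mul_pos hβ0 hlam.1).le hβlam.le) (mul_pos hγ0 hlam.1).le
        (by nlinarith [hlam.2]))

lemma F1cond.mapsTo_continuous_injOn {g : ℝ → ℝ} {γ : ℝ} (h : F1cond g γ lam) (hlam : 0 < lam) :
    MapsTo g (Icc 0 1) (Icc 0 1) ∧ Continuous g ∧ InjOn g (Icc 0 1) := by
  obtain ⟨hg, hlamγ, hγ1⟩ := h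
  have hγ : 0 < γ := hlam.trans_le hlamγ
  rw [show g = fun x => γ * (1 - x) from funext hg]
  refine ⟨fun x hx => ⟨?_, ?_⟩, by fun_prop, fun x _ y _ hxy => ?_⟩
  · nlinarith [hx.2]
  · nlinarith [hx.1]
  · linarith [mul_left_cancel₀ hγ.ne' hxy]

end Hypotheses

/-- `G` restricted to `Λ_G` is topologically transitive. -/
theorem stmt6 (f₀ f₁ f₂ : ℝ → ℝ) (β₀ lam₀ γ β₂ : ℝ)
    (h0 : F0cond f₀ β₀ lam₀) (h1 : F1cond f₁ γ lam₀) (h2 : F2cond f₂ β₂ lam₀)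
    (h01 : F01cond f₀ β₀ lam₀ γ) :
    ∀ U V : Set XSp, IsOpen U → IsOpen V →
      (U ∩ LamG ![f₀, f₁, f₂]).Nonempty → (V ∩ LamG ![f₀, f₁, f₂]).Nonempty →
      ∃ n : ℕ,
        ((Gmap ![f₀, f₁, f₂])^[n] '' (U ∩ LamG ![f₀, f₁, f₂]) ∩
          (V ∩ LamG ![f₀, f₁, f₂])).Nonempty := by
  have ⟨hcd₀, hmaps₀, hmono₀, hf₀0, hf₀1, _, _, hβ₀, _, hlam0, hlam1, _⟩ := h0
  have hγ : γ ∈ Ioo 0 1 := ⟨hlam0.trans_le h1.2.1, h1.2.2⟩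
  obtain ⟨c, hc, μ, hμ, hμc⟩ := h0.exists_one_sub_le h01.1
    (lt_one_sub_mul_sub_one hβ₀ ⟨hlam0, hlam1⟩ hγ.1 hγ.2.le h01.2)
  obtain ⟨hcd₂, hmaps₂, hmono₂, -⟩ := h2
  have hfs (i : Fin 3) : MapsTo (![f₀, f₁, f₂] i) (Icc 0 1) (Icc 0 1) ∧
      Continuous (![f₀, f₁, f₂] i) ∧ InjOn (![f₀, f₁, f₂] i) (Icc 0 1) := by
    fin_cases i
    exacts [⟨hmaps₀, hcd₀.continuous, hmono₀.injOn⟩, h1.mapsTo_continuous_injOn hlam0,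
      ⟨hmaps₂, hcd₂.continuous, hmono₂.injOn⟩]
  refine topologicallyTransitive_LamG_of_dense_reachSet (fun i => (hfs i).1) (fun i => (hfs i).2.1)
    (fun i => (hfs i).2.2) ?_ fun a b ha hab hb => ?_
  · simpa [hf₀0, hf₀1] using intermediate_value_Icc zero_le_one hcd₀.continuous.continuousOn
  · rw [← closure_Ioo zero_ne_one]
    exact closure_mono (Ioo_subset_reachSet (i₀ := 0) (i₁ := 1) (h0.concaveNorthSouth h01.1) h1.1
      hγ hc (by linarith) hμc ha hab hb)

end
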